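/- arXiv:1011.4438 — 2 statements merged into one kernel-verified Lean document; each statement's English description precedes it below -/
import Mathlib

section
/- Let Σ₂ = {a, b} with a, b odd positive integers, and let w be a smooth infinite word over Σ₂ (i.e. Δ^k(w) is an infinite word over Σ₂ for every k ≥ 1). Then the set of finite factors of w is closed under reversal. -/
/-- Partial sums of a sequence of run lengths. -/
def partialSum (t : ℕ → ℕ) : ℕ → ℕ
  | 0 => 0
  | k + 1 => partialSum t k + t k

/-- `w` decomposes into maximal runs with base sequence `α` and run-length
sequence `t`. -/
def IsRunDecomp (w α t : ℕ → ℕ) : Prop :=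
  (∀ k, 1 ≤ t k) ∧ (∀ k, α k ≠ α (k + 1)) ∧
    ∀ k i, partialSum t k ≤ i → i < partialSum t (k + 1) → w i = α k

/-- `t` is the run-length sequence Δ(w) of the infinite word `w`. -/
def IsDelta (w t : ℕ → ℕ) : Prop := ∃ α, IsRunDecomp w α t

/-- `w` is a smooth infinite word over `{a, b}`: every iterated derivative
`Δ^k(w)` is again an infinite word over `{a, b}`. -/
def SmoothInf (a b : ℕ) (w : ℕ → ℕ) : Prop :=
  ∃ D : ℕ → ℕ → ℕ, D 0 = w ∧
    ∀ k, (∀ i, D k i = a ∨ D k i = b) ∧ IsDelta (D k) (D (k + 1))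

/-- The finite word `f` occurs in `w` at position `p`. -/
def factorAt (w : ℕ → ℕ) (p : ℕ) (f : List ℕ) : Prop :=
  (List.range f.length).map (fun j => w (p + j)) = f

/-! ### Auxiliary definitions and lemmas -/

/-- The prefix of length `m` of `w` is a palindrome. -/
def PalPrefix (w : ℕ → ℕ) (m : ℕ) : Prop := ∀ i < m, w i = w (m - 1 - i)

lemma ps_mono (t : ℕ → ℕ) : Monotone (partialSum t) := by
  apply monotone_nat_of_le_succ
  intro n
  have e : partialSum t (n + 1) = partialSum t n + t n := rfl
  omega

lemma ps_strict (t : ℕ → ℕ) (h : ∀ k, 1 ≤ t k) : StrictMono (partialSum t) := by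
  apply strictMono_nat_of_lt_succ
  intro n
  have e : partialSum t (n + 1) = partialSum t n + t n := rfl
  have := h n
  omega

lemma le_ps (t : ℕ → ℕ) (h : ∀ k, 1 ≤ t k) : ∀ m, m ≤ partialSum t m := by
  intro m
  induction m with
  | zero => omega
  | succ m ih =>
    have e : partialSum t (m + 1) = partialSum t m + t m := rfl
    have := h m
    omega

lemma ps_pal {t : ℕ → ℕ} {m : ℕ} (hpal : ∀ i < m, t i = t (m - 1 - i)) :
    ∀ k, k ≤ m → partialSum t k + partialSum t (m - k) = partialSum t m := by
  intro k
  induction k with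
  | zero =>
    intro _
    have e : partialSum t 0 = 0 := rfl
    simp [e]
  | succ k ih =>
    intro hk
    have h1 := ih (by omega)
    have h3 := hpal (m - (k + 1)) (by omega)
    rw [show m - 1 - (m - (k + 1)) = k from by omega] at h3
    have e1 : partialSum t (k + 1) = partialSum t k + t k := rfl
    have e2 : partialSum t (m - k) = partialSum t (m - (k + 1)) + t (m - (k + 1)) := by
      rw [show m - k = (m - (k + 1)) + 1 from by omega]
      rfl
    omega

lemma find_run (t : ℕ → ℕ) (m i : ℕ) (hi : i < partialSum t m) :
    ∃ k, k < m ∧ partialSum t k ≤ i ∧ i < partialSum t (k + 1) := by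
  induction m with
  | zero =>
    have e : partialSum t 0 = 0 := rfl
    omega
  | succ m ih =>
    by_cases h : i < partialSum t m
    · obtain ⟨k, h1, h2, h3⟩ := ih h
      exact ⟨k, by omega, h2, h3⟩
    · exact ⟨m, by omega, by omega, hi⟩

lemma ps_mod2 {t : ℕ → ℕ} (ht : ∀ i, t i % 2 = 1) (m : ℕ) :
    partialSum t m % 2 = m % 2 := by
  induction m with
  | zero => rfl
  | succ m ih =>
    have h := ht m
    have e : partialSum t (m + 1) = partialSum t m + t m := rfl
    omega

lemma ps_lower (t : ℕ → ℕ) (h : ∀ k, 1 ≤ t k) :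
    ∀ m, 2 ≤ m → t 0 + t 1 + (m - 2) ≤ partialSum t m := by
  intro m
  induction m with
  | zero => omega
  | succ m ih =>
    intro h2
    by_cases hm : 2 ≤ m
    · have := ih hm
      have e : partialSum t (m + 1) = partialSum t m + t m := rfl
      have := h m
      omega
    · have hm1 : m = 1 := by omega
      subst hm1
      have e : partialSum t (1 + 1) = 0 + t 0 + t 1 := rfl
      omega

lemma alt_step {a b : ℕ} {α : ℕ → ℕ} (hv : ∀ k, α k = a ∨ α k = b)
    (hne : ∀ k, α k ≠ α (k + 1)) (k : ℕ) : α (k + 2) = α k := by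
  show α (k + 1 + 1) = α k
  have n1 := hne k
  have n2 := hne (k + 1)
  rcases hv k with h1 | h1 <;> rcases hv (k + 1) with h2 | h2 <;>
    rcases hv (k + 1 + 1) with h3 | h3 <;> omega

lemma alt_add_two_mul {α : ℕ → ℕ} (hstep : ∀ k, α (k + 2) = α k) :
    ∀ n k, α (k + 2 * n) = α k := by
  intro n
  induction n with
  | zero => intro k; rfl
  | succ n ih =>
    intro k
    rw [show k + 2 * (n + 1) = (k + 2 * n) + 2 from by ring, hstep (k + 2 * n), ih k]

lemma alt_parity {a b : ℕ} {α : ℕ → ℕ} (hv : ∀ k, α k = a ∨ α k = b)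
    (hne : ∀ k, α k ≠ α (k + 1)) {k j : ℕ} (h : k % 2 = j % 2) : α k = α j := by
  have hstep := alt_step hv hne
  rcases le_total k j with hle | hle
  · obtain ⟨n, hn⟩ : ∃ n, j = k + 2 * n := ⟨(j - k) / 2, by omega⟩
    rw [hn, alt_add_two_mul hstep]
  · obtain ⟨n, hn⟩ : ∃ n, k = j + 2 * n := ⟨(k - j) / 2, by omega⟩
    rw [hn, alt_add_two_mul hstep]

lemma alpha_mem {a b : ℕ} {v α t : ℕ → ℕ} (h1 : ∀ k, 1 ≤ t k)
    (h3 : ∀ k i, partialSum t k ≤ i → i < partialSum t (k + 1) → v i = α k)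
    (hvab : ∀ i, v i = a ∨ v i = b) : ∀ k, α k = a ∨ α k = b := by
  intro k
  have hlt : partialSum t k < partialSum t (k + 1) := ps_strict t h1 (Nat.lt_succ_self k)
  have := h3 k (partialSum t k) le_rfl hlt
  rw [← this]
  exact hvab _

/-- Key expansion lemma: an odd palindromic prefix of the derivative expands to
an odd palindromic prefix of the word. -/
lemma expand {a b : ℕ} {v α t : ℕ → ℕ} (hd : IsRunDecomp v α t)
    (htab : ∀ i, Odd (t i)) (hvab : ∀ i, v i = a ∨ v i = b)
    {m : ℕ} (hm : Odd m) (hpal : PalPrefix t m) :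
    Odd (partialSum t m) ∧ PalPrefix v (partialSum t m) := by
  obtain ⟨h1, h2, h3⟩ := hd
  rw [Nat.odd_iff] at hm
  have hodd : Odd (partialSum t m) := by
    have h := ps_mod2 (fun i => Nat.odd_iff.mp (htab i)) m
    rw [Nat.odd_iff]
    omega
  refine ⟨hodd, ?_⟩
  intro i hi
  obtain ⟨k, hkm, hk1, hk2⟩ := find_run t m i hi
  have hα : ∀ k', α k' = a ∨ α k' = b := alpha_mem h1 h3 hvab
  have key1 := ps_pal hpal (k + 1) (by omega)
  have key2 := ps_pal hpal k (by omega)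
  rw [show m - (k + 1) = m - 1 - k from by omega] at key1
  rw [show m - k = (m - 1 - k) + 1 from by omega] at key2
  have hmono : partialSum t (k + 1) ≤ partialSum t m := ps_mono t (by omega)
  have e1 : v i = α k := h3 k i hk1 hk2
  have e2 : v (partialSum t m - 1 - i) = α (m - 1 - k) :=
    h3 (m - 1 - k) (partialSum t m - 1 - i) (by omega) (by omega)
  have e3 : α (m - 1 - k) = α k := alt_parity hα h2 (by omega)
  rw [e1, e2, e3]

/-- Iterated inverse-image lengths: `lenD D k j` is the length of the prefix of
`D j` obtained by expanding the length-1 prefix of `D (j+k)` down `k` levels. -/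
def lenD (D : ℕ → ℕ → ℕ) : ℕ → ℕ → ℕ
  | 0, _ => 1
  | k + 1, j => partialSum (D (j + 1)) (lenD D k (j + 1))

lemma lenD_pal {a b : ℕ} (ha : Odd a) (hb : Odd b) {D : ℕ → ℕ → ℕ}
    (hD : ∀ k, (∀ i, D k i = a ∨ D k i = b) ∧ IsDelta (D k) (D (k + 1))) :
    ∀ k j, Odd (lenD D k j) ∧ PalPrefix (D j) (lenD D k j) := by
  intro k
  induction k with
  | zero =>
    intro j
    rw [show lenD D 0 j = 1 from rfl]
    refine ⟨odd_one, ?_⟩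
    intro i hi
    have : i = 0 := by omega
    subst this
    congr 1
  | succ k ih =>
    intro j
    obtain ⟨hodd, hpal⟩ := ih (j + 1)
    obtain ⟨α, hrd⟩ := (hD j).2
    have htab : ∀ i, Odd (D (j + 1) i) := by
      intro i; rcases (hD (j + 1)).1 i with h | h <;> rw [h] <;> assumption
    have e : lenD D (k + 1) j = partialSum (D (j + 1)) (lenD D k (j + 1)) := rfl
    rw [e]
    exact expand hrd htab (hD j).1 hodd hpal

lemma lenD_le_succ {D : ℕ → ℕ → ℕ} (hD1 : ∀ j i, 1 ≤ D (j + 1) i) :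
    ∀ k j, lenD D k j ≤ lenD D (k + 1) j := by
  intro k
  induction k with
  | zero =>
    intro j
    have e0 : lenD D 0 j = 1 := rfl
    have e1 : lenD D (0 + 1) j = 0 + D (j + 1) 0 := rfl
    have := hD1 j 0
    omega
  | succ k ih =>
    intro j
    have e1 : lenD D (k + 1) j = partialSum (D (j + 1)) (lenD D k (j + 1)) := rfl
    have e2 : lenD D (k + 1 + 1) j = partialSum (D (j + 1)) (lenD D (k + 1) (j + 1)) := rfl
    rw [e1, e2]
    exact ps_mono (D (j + 1)) (ih (j + 1))

lemma lenD_stall {D : ℕ → ℕ → ℕ} (hD1 : ∀ j i, 1 ≤ D (j + 1) i) :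
    ∀ k j, lenD D (k + 1) j = lenD D k j → D (j + k + 1) 0 = 1 := by
  intro k
  induction k with
  | zero =>
    intro j h
    have e0 : lenD D 0 j = 1 := rfl
    have e1 : lenD D (0 + 1) j = 0 + D (j + 1) 0 := rfl
    show D (j + 1) 0 = 1
    omega
  | succ k ih =>
    intro j h
    have e1 : lenD D (k + 1 + 1) j = partialSum (D (j + 1)) (lenD D (k + 1) (j + 1)) := rfl
    have e2 : lenD D (k + 1) j = partialSum (D (j + 1)) (lenD D k (j + 1)) := rfl
    have hle := lenD_le_succ hD1 k (j + 1)
    have heq : lenD D (k + 1) (j + 1) = lenD D k (j + 1) := by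
      by_contra hne
      have hlt : lenD D k (j + 1) < lenD D (k + 1) (j + 1) := by omega
      have := ps_strict (D (j + 1)) (fun i => hD1 j i) hlt
      omega
    have := ih (j + 1) heq
    rw [show j + (k + 1) + 1 = (j + 1) + k + 1 from by omega]
    exact this

/-- The hard (stalling) case: if from level `M` on every derivative starts with
the letter 1, we still get arbitrarily long odd palindromic prefixes. -/
lemma hard_case {a b : ℕ} (ha : Odd a) (hb : Odd b) (hab : a ≠ b)
    {D : ℕ → ℕ → ℕ}
    (hD : ∀ k, (∀ i, D k i = a ∨ D k i = b) ∧ IsDelta (D k) (D (k + 1)))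
    {M : ℕ} (hM : ∀ k, M ≤ k → D k 0 = 1) :
    ∀ n j, M ≤ j → ∃ m, n ≤ m ∧ Odd m ∧ PalPrefix (D j) m := by
  have hoa := Nat.odd_iff.mp ha
  have hob := Nat.odd_iff.mp hb
  -- the second letter of every derivative at level ≥ M is ≥ 3
  have claim1 : ∀ j', M ≤ j' → 3 ≤ D j' 1 := by
    intro j' hj'
    obtain ⟨α, h1, h2, h3⟩ := (hD j').2
    have ht0 : D (j' + 1) 0 = 1 := hM (j' + 1) (by omega)
    have ez : partialSum (D (j' + 1)) 0 = 0 := rfl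
    have e1 : partialSum (D (j' + 1)) (0 + 1) = 0 + D (j' + 1) 0 := rfl
    have e2 : partialSum (D (j' + 1)) (1 + 1) =
        partialSum (D (j' + 1)) (0 + 1) + D (j' + 1) 1 := rfl
    have e1' : partialSum (D (j' + 1)) 1 = 0 + D (j' + 1) 0 := rfl
    have e2' : partialSum (D (j' + 1)) 2 =
        partialSum (D (j' + 1)) 1 + D (j' + 1) 1 := rfl
    have ht1 : 1 ≤ D (j' + 1) 1 := h1 1
    have ha0 : D j' 0 = α 0 := h3 0 0 (by omega) (by omega)
    have ha1 : D j' 1 = α 1 := h3 1 1 (by omega) (by omega)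
    have hne : α 0 ≠ α 1 := h2 0
    have h0 : D j' 0 = 1 := hM j' hj'
    rcases (hD j').1 1 with h | h <;> omega
  have base : ∀ j', M ≤ j' →
      Odd (D (j' + 1) 1 + 2) ∧ PalPrefix (D j') (D (j' + 1) 1 + 2) := by
    intro j' hj'
    obtain ⟨α, h1, h2, h3⟩ := (hD j').2
    have ht0 : D (j' + 1) 0 = 1 := hM (j' + 1) (by omega)
    have ez : partialSum (D (j' + 1)) 0 = 0 := rfl
    have e1 : partialSum (D (j' + 1)) (0 + 1) = 0 + D (j' + 1) 0 := rfl
    have e2 : partialSum (D (j' + 1)) (1 + 1) =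
        partialSum (D (j' + 1)) (0 + 1) + D (j' + 1) 1 := rfl
    have e3 : partialSum (D (j' + 1)) (2 + 1) =
        partialSum (D (j' + 1)) (1 + 1) + D (j' + 1) 2 := rfl
    have e1' : partialSum (D (j' + 1)) 1 = 0 + D (j' + 1) 0 := rfl
    have e2' : partialSum (D (j' + 1)) 2 =
        partialSum (D (j' + 1)) 1 + D (j' + 1) 1 := rfl
    have ht1 : 1 ≤ D (j' + 1) 1 := h1 1
    have ht2 : 1 ≤ D (j' + 1) 2 := h1 2
    have hodd1 : Odd (D (j' + 1) 1) := by
      rcases (hD (j' + 1)).1 1 with h | h <;> rw [h] <;> assumption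
    rw [Nat.odd_iff] at hodd1
    constructor
    · rw [Nat.odd_iff]; omega
    · have hα : ∀ k', α k' = a ∨ α k' = b := alpha_mem h1 h3 (hD j').1
      have hstep := alt_step hα h2
      have ha0 : D j' 0 = α 0 := h3 0 0 (by omega) (by omega)
      have ha2 : D j' (D (j' + 1) 1 + 1) = α 2 :=
        h3 2 (D (j' + 1) 1 + 1) (by omega) (by omega)
      intro i hi
      by_cases hc1 : i = 0
      · subst hc1
        rw [show D (j' + 1) 1 + 2 - 1 - 0 = D (j' + 1) 1 + 1 from by omega,
          ha0, ha2]
        exact (hstep 0).symm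
      · by_cases hc2 : i = D (j' + 1) 1 + 1
        · subst hc2
          rw [show D (j' + 1) 1 + 2 - 1 - (D (j' + 1) 1 + 1) = 0 from by omega,
            ha0, ha2]
          exact hstep 0
        · have hbnd : 1 ≤ i ∧ i ≤ D (j' + 1) 1 := by omega
          rw [h3 1 i (by omega) (by omega),
            h3 1 (D (j' + 1) 1 + 2 - 1 - i) (by omega) (by omega)]
  -- main induction: palindromic prefixes of length ≥ n + 3 at every level ≥ M
  have main : ∀ n j, M ≤ j → ∃ m, Odd m ∧ PalPrefix (D j) m ∧ n + 3 ≤ m := by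
    intro n
    induction n with
    | zero =>
      intro j hj
      obtain ⟨ho, hp⟩ := base j hj
      have h3' := claim1 (j + 1) (by omega)
      exact ⟨D (j + 1) 1 + 2, ho, hp, by omega⟩
    | succ n ih =>
      intro j hj
      obtain ⟨m, ho, hp, hn⟩ := ih (j + 1) (by omega)
      obtain ⟨α, hrd⟩ := (hD j).2
      have htab : ∀ i, Odd (D (j + 1) i) := by
        intro i; rcases (hD (j + 1)).1 i with h | h <;> rw [h] <;> assumption
      obtain ⟨ho', hp'⟩ := expand hrd htab (hD j).1 ho hp
      refine ⟨partialSum (D (j + 1)) m, ho', hp', ?_⟩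
      have h1 : ∀ k, 1 ≤ D (j + 1) k := hrd.1
      have hlow := ps_lower (D (j + 1)) h1 m (by omega)
      have hc1 := claim1 (j + 1) (by omega)
      have h10 := h1 0
      omega
  intro n j hj
  obtain ⟨m, ho, hp, hn⟩ := main n j hj
  exact ⟨m, by omega, ho, hp⟩

/-- Transfer arbitrarily long odd palindromic prefixes from level `J` down to
level 0. -/
lemma descend {a b : ℕ} {D : ℕ → ℕ → ℕ} (ha : Odd a) (hb : Odd b)
    (hD : ∀ k, (∀ i, D k i = a ∨ D k i = b) ∧ IsDelta (D k) (D (k + 1))) :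
    ∀ J, (∀ n, ∃ m, n ≤ m ∧ Odd m ∧ PalPrefix (D J) m) →
      ∀ n, ∃ m, n ≤ m ∧ Odd m ∧ PalPrefix (D 0) m := by
  intro J
  induction J with
  | zero => exact id
  | succ J ih =>
    intro h
    apply ih
    intro n
    obtain ⟨m, hn, ho, hp⟩ := h n
    obtain ⟨α, hrd⟩ := (hD J).2
    have htab : ∀ i, Odd (D (J + 1) i) := by
      intro i; rcases (hD (J + 1)).1 i with h' | h' <;> rw [h'] <;> assumption
    obtain ⟨ho', hp'⟩ := expand hrd htab (hD J).1 ho hp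
    refine ⟨partialSum (D (J + 1)) m, ?_, ho', hp'⟩
    have := le_ps (D (J + 1)) hrd.1 m
    omega

/-- For `a, b` odd, the factor set of any smooth infinite word over `{a, b}`
is closed under reversal. -/
theorem stmt13 (a b : ℕ) (ha : Odd a) (hb : Odd b) (hab : a ≠ b)
    (w : ℕ → ℕ) (hs : SmoothInf a b w) :
    ∀ f : List ℕ, (∃ p, factorAt w p f) → ∃ p, factorAt w p f.reverse := by
  obtain ⟨D, hD0, hD⟩ := hs
  have hD1 : ∀ j i, 1 ≤ D (j + 1) i := by
    intro j i
    obtain ⟨α, h1, _, _⟩ := (hD j).2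
    exact h1 i
  -- arbitrarily long palindromic prefixes of w
  have hU : ∀ n, ∃ m, n ≤ m ∧ PalPrefix w m := by
    by_cases hst : ∃ K, ∀ k, K ≤ k → D (k + 1) 0 = 1
    · obtain ⟨K, hK⟩ := hst
      have hM : ∀ k, K + 1 ≤ k → D k 0 = 1 := by
        intro k hk
        obtain ⟨j, rfl⟩ : ∃ j, k = j + 1 := ⟨k - 1, by omega⟩
        exact hK j (by omega)
      have hh := hard_case ha hb hab hD hM
      have hd0 := descend ha hb hD (K + 1) (fun n => hh n (K + 1) le_rfl)
      intro n
      obtain ⟨m, h1, _, h3⟩ := hd0 n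
      exact ⟨m, h1, hD0 ▸ h3⟩
    · push_neg at hst
      have hpal := lenD_pal ha hb hD
      have hmono : ∀ k k', k ≤ k' → lenD D k 0 ≤ lenD D k' 0 := by
        intro k k' hk
        exact monotone_nat_of_le_succ (fun n => lenD_le_succ hD1 n 0) hk
      have hunb : ∀ n, ∃ k, n ≤ lenD D k 0 := by
        intro n
        induction n with
        | zero => exact ⟨0, by omega⟩
        | succ n ihh =>
          obtain ⟨k, hk⟩ := ihh
          obtain ⟨k', hk1, hk2⟩ := hst k
          have hle := hmono k k' hk1
          have hstep := lenD_le_succ hD1 k' 0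
          have hne : lenD D (k' + 1) 0 ≠ lenD D k' 0 := by
            intro h
            have := lenD_stall hD1 k' 0 h
            simp only [Nat.zero_add] at this
            exact hk2 this
          exact ⟨k' + 1, by omega⟩
      intro n
      obtain ⟨k, hk⟩ := hunb n
      exact ⟨lenD D k 0, hk, hD0 ▸ (hpal k 0).2⟩
  intro f ⟨p, hp⟩
  obtain ⟨m, hm, hpal⟩ := hU (p + f.length)
  refine ⟨m - (p + f.length), ?_⟩
  have hf : ∀ j, (hj : j < f.length) → f[j] = w (p + j) := by
    intro j hj
    have hj' : j < ((List.range f.length).map (fun j => w (p + j))).length := by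
      simpa using hj
    have := List.getElem_of_eq hp.symm hj
    simpa using this
  show (List.range f.reverse.length).map (fun j => w (m - (p + f.length) + j)) = f.reverse
  apply List.ext_getElem
  · simp
  · intro i h1 h2
    simp only [List.getElem_map, List.getElem_range, List.getElem_reverse,
      List.length_reverse] at h1 h2 ⊢
    have hi : i < f.length := by simpa using h2
    rw [hf (f.length - 1 - i) (by omega)]
    have hpp := hpal (p + (f.length - 1 - i)) (by omega)
    rw [hpp, show m - 1 - (p + (f.length - 1 - i)) = m - (p + f.length) + i from by omega]
end

section
/- Let Σ₂ = {a, b} with a, b even positive integers, and let w be a two-times differentiable infinite word over Σ₂ (Δ(w) and Δ²(w) are infinite words over Σ₂). Then the frequency of each letter in w exists and equals 1/2, i.e. lim_{k→∞} |Pref_k(w)|_a / k = 1/2. -/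
/-- The prefix of length `k` of an infinite word. -/
def pref (w : ℕ → ℕ) (k : ℕ) : List ℕ := (List.range k).map w

/-!
Count `a` as `+1` and every other letter as `-1`. Since the runs of `w` alternate between the
two letters, this signed sum over a prefix is, up to the last (incomplete) run, `±∑ (-1)^k Δ(w)_k`.
The runs of `Δ(w)` have the even lengths `Δ²(w)_j`, so that alternating sum cancels run by run.
Both sums therefore stay bounded by `max Δ(w)`, so `2 |Pref_k(w)|_a - k` is bounded and the
frequency of `a` is `1/2`.
-/

open Finset Filter Topology

lemma partialSum_succ (t : ℕ → ℕ) (k : ℕ) :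
    partialSum t (k + 1) = partialSum t k + t k := rfl

lemma exists_partialSum_le_lt {t : ℕ → ℕ} (ht : ∀ k, 1 ≤ t k) (n : ℕ) :
    ∃ m, partialSum t m ≤ n ∧ n < partialSum t (m + 1) := by
  induction n with
  | zero => exact ⟨0, le_rfl, by have := ht 0; simp only [partialSum]; omega⟩
  | succ n ih =>
    obtain ⟨m, hm, hm'⟩ := ih
    by_cases h : n + 1 < partialSum t (m + 1)
    · exact ⟨m, by omega, h⟩
    · refine ⟨m + 1, by omega, ?_⟩
      have := ht (m + 1)
      rw [partialSum_succ t (m + 1)]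
      omega

lemma even_partialSum {t : ℕ → ℕ} (ht : ∀ k, Even (t k)) (m : ℕ) : Even (partialSum t m) := by
  induction m with
  | zero => exact ⟨0, rfl⟩
  | succ m ih => exact ih.add (ht m)

lemma sum_range_partialSum {M : Type*} [AddCommMonoid M] (t : ℕ → ℕ) (g : ℕ → M) (m : ℕ) :
    ∑ i ∈ range (partialSum t m), g i =
      ∑ k ∈ range m, ∑ j ∈ range (t k), g (partialSum t k + j) := by
  induction m with
  | zero => simp [partialSum]
  | succ m ih => rw [partialSum_succ, sum_range_add, ih, sum_range_succ]

lemma abs_sum_range_le_of_blocks {t : ℕ → ℕ} (ht : ∀ k, 1 ≤ t k) (g : ℕ → ℤ) {B C : ℤ}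
    (hB : ∀ m, |∑ k ∈ range m, ∑ j ∈ range (t k), g (partialSum t k + j)| ≤ B)
    (hC : ∀ k r, r < t k → |∑ j ∈ range r, g (partialSum t k + j)| ≤ C) (n : ℕ) :
    |∑ i ∈ range n, g i| ≤ B + C := by
  obtain ⟨m, hm, hm'⟩ := exists_partialSum_le_lt ht n
  obtain ⟨r, rfl⟩ := Nat.exists_eq_add_of_le hm
  rw [partialSum_succ] at hm'
  rw [sum_range_add, sum_range_partialSum]
  exact (abs_add_le _ _).trans (add_le_add (hB m) (hC m r (by omega)))

namespace IsRunDecomp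

variable {w α t : ℕ → ℕ}

lemma apply_partialSum_add (h : IsRunDecomp w α t) {k r : ℕ} (hr : r < t k) :
    w (partialSum t k + r) = α k :=
  h.2.2 k _ (Nat.le_add_right _ _) (by rw [partialSum_succ]; omega)

lemma apply_partialSum (h : IsRunDecomp w α t) (k : ℕ) : w (partialSum t k) = α k :=
  h.apply_partialSum_add (h.1 k)

end IsRunDecomp

lemma abs_sum_neg_one_pow_mul_le {d₁ d₂ : ℕ → ℕ} (h : IsDelta d₁ d₂)
    (heven : ∀ k, Even (d₂ k)) {M : ℕ} (hM : ∀ i, d₁ i ≤ M) (n : ℕ) :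
    |∑ i ∈ range n, (-1 : ℤ) ^ i * d₁ i| ≤ M := by
  obtain ⟨β, hβ⟩ := h
  have hrun : ∀ k r, r ≤ d₂ k →
      ∑ j ∈ range r, (-1 : ℤ) ^ (partialSum d₂ k + j) * d₁ (partialSum d₂ k + j) =
        (if Even r then 0 else 1) * β k := by
    intro k r hr
    rw [← neg_one_geom_sum, sum_mul]
    refine sum_congr rfl fun j hj => ?_
    rw [mem_range] at hj
    rw [pow_add, (even_partialSum heven k).neg_one_pow, one_mul,
      hβ.apply_partialSum_add (by omega)]
  have hβM : ∀ k, (β k : ℤ) ≤ M := fun k => by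
    exact_mod_cast hβ.apply_partialSum k ▸ hM _
  simpa using abs_sum_range_le_of_blocks hβ.1 _ (B := 0) (C := M)
    (fun m => by simp [hrun _ _ le_rfl, heven])
    (fun k r hr => by
      rw [hrun k r hr.le]
      split_ifs <;> simp [hβM])
    n

def letterSign (a x : ℕ) : ℤ := if x = a then 1 else -1

lemma abs_letterSign (a x : ℕ) : |letterSign a x| = 1 := by
  unfold letterSign; split_ifs <;> simp

lemma letterSign_eq_neg {a b x y : ℕ} (hx : x = a ∨ x = b) (hy : y = a ∨ y = b)
    (hxy : x ≠ y) : letterSign a y = -letterSign a x := by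
  rcases hx with rfl | rfl <;> rcases hy with rfl | rfl <;>
    simp_all [letterSign, eq_comm]

lemma two_mul_count_pref_sub (w : ℕ → ℕ) (a n : ℕ) :
    2 * ((pref w n).count a : ℤ) - n = ∑ i ∈ range n, letterSign a (w i) := by
  induction n with
  | zero => simp [pref]
  | succ n ih =>
    rw [pref, List.range_succ, List.map_append, ← pref, List.count_append, sum_range_succ, ← ih]
    by_cases h : w n = a <;> simp [letterSign, h] <;> ring

lemma IsRunDecomp.abs_sum_letterSign_le {w α t : ℕ → ℕ} {a b M : ℕ} (h : IsRunDecomp w α t)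
    (hw : ∀ i, w i = a ∨ w i = b) (hM : ∀ k, t k ≤ M)
    (halt : ∀ m, |∑ k ∈ range m, (-1 : ℤ) ^ k * t k| ≤ M) (n : ℕ) :
    |∑ i ∈ range n, letterSign a (w i)| ≤ 2 * M := by
  have hα : ∀ k, α k = a ∨ α k = b := fun k => h.apply_partialSum k ▸ hw _
  have hsign : ∀ k, letterSign a (α k) = (-1) ^ k * letterSign a (α 0) := by
    intro k
    induction k with
    | zero => simp
    | succ k ih => rw [letterSign_eq_neg (hα k) (hα (k + 1)) (h.2.1 k), ih, pow_succ]; ring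
  have hrun : ∀ k r, r ≤ t k →
      ∑ j ∈ range r, letterSign a (w (partialSum t k + j)) = r * letterSign a (α k) := by
    intro k r hr
    have hconst : ∀ j ∈ range r, letterSign a (w (partialSum t k + j)) = letterSign a (α k) :=
      fun j hj => by rw [h.apply_partialSum_add (by rw [mem_range] at hj; omega)]
    rw [sum_congr rfl hconst, sum_const, card_range, nsmul_eq_mul]
  rw [two_mul]
  refine abs_sum_range_le_of_blocks h.1 _ (fun m => ?_) (fun k r hr => ?_) n
  · have hblocks : ∑ k ∈ range m, (t k : ℤ) * letterSign a (α k) =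
        letterSign a (α 0) * ∑ k ∈ range m, (-1 : ℤ) ^ k * t k := by
      rw [mul_sum]
      exact sum_congr rfl fun k _ => by rw [hsign]; ring
    rw [sum_congr rfl fun k _ => hrun k (t k) le_rfl, hblocks, abs_mul, abs_letterSign, one_mul]
    exact halt m
  · rw [hrun k r hr.le, abs_mul, abs_letterSign, mul_one, Nat.abs_cast]
    exact_mod_cast hr.le.trans (hM k)

lemma tendsto_div_half_of_abs_two_mul_sub_le {c : ℕ → ℕ} {C : ℤ}
    (hC : ∀ n, |2 * (c n : ℤ) - n| ≤ C) :
    Tendsto (fun n => (c n : ℝ) / n) atTop (𝓝 (1 / 2)) := by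
  have hC' : ∀ n, |2 * (c n : ℝ) - n| ≤ C := fun n => by exact_mod_cast hC n
  refine tendsto_sub_nhds_zero_iff.mp ?_
  refine squeeze_zero_norm' ?_ (tendsto_const_div_atTop_nhds_zero_nat ((C : ℝ) / 2))
  filter_upwards [eventually_gt_atTop 0] with n hn
  have hn' : (0 : ℝ) < n := by exact_mod_cast hn
  rw [Real.norm_eq_abs, show (c n : ℝ) / n - 1 / 2 = (2 * c n - n) / 2 / n by field_simp,
    abs_div, abs_div, abs_two, abs_of_pos hn']
  gcongr
  exact hC' n

theorem tendsto_count_pref_div_of_isDelta {w d₁ d₂ : ℕ → ℕ} {a b M : ℕ}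
    (hw : ∀ i, w i = a ∨ w i = b) (h₁ : IsDelta w d₁) (h₂ : IsDelta d₁ d₂)
    (hM : ∀ i, d₁ i ≤ M) (heven : ∀ i, Even (d₂ i)) :
    Tendsto (fun k => ((pref w k).count a : ℝ) / k) atTop (𝓝 (1 / 2)) := by
  obtain ⟨α, hα⟩ := h₁
  refine tendsto_div_half_of_abs_two_mul_sub_le (C := 2 * M) fun n => ?_
  rw [two_mul_count_pref_sub]
  exact hα.abs_sum_letterSign_le hw hM (abs_sum_neg_one_pow_mul_le h₂ heven hM) n

theorem stmt15_general (a b : ℕ) (ha : Even a) (hb : Even b)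
    (w : ℕ → ℕ) (hw : ∀ i, w i = a ∨ w i = b)
    (d1 d2 : ℕ → ℕ) (h1 : IsDelta w d1) (hd1 : ∀ i, d1 i = a ∨ d1 i = b)
    (h2 : IsDelta d1 d2) (hd2 : ∀ i, d2 i = a ∨ d2 i = b) :
    Filter.Tendsto (fun k => ((pref w k).count a : ℝ) / k)
      Filter.atTop (nhds (1 / 2)) ∧
    Filter.Tendsto (fun k => ((pref w k).count b : ℝ) / k)
      Filter.atTop (nhds (1 / 2)) := by
  have hM : ∀ i, d1 i ≤ max a b := fun i =>
    (hd1 i).elim (fun h => h ▸ le_max_left a b) (fun h => h ▸ le_max_right a b)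
  have heven : ∀ i, Even (d2 i) := fun i => (hd2 i).elim (· ▸ ha) (· ▸ hb)
  exact ⟨tendsto_count_pref_div_of_isDelta hw h1 h2 hM heven,
    tendsto_count_pref_div_of_isDelta (fun i => (hw i).symm) h1 h2 hM heven⟩

/-- Over an even two-letter alphabet `{a, b}`, every two-times differentiable
infinite word has letter frequency `1/2`. -/
theorem stmt15 (a b : ℕ) (ha : Even a) (hb : Even b)
    (hapos : 0 < a) (hbpos : 0 < b) (hab : a ≠ b)
    (w : ℕ → ℕ) (hw : ∀ i, w i = a ∨ w i = b)
    (d1 d2 : ℕ → ℕ) (h1 : IsDelta w d1) (hd1 : ∀ i, d1 i = a ∨ d1 i = b)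
    (h2 : IsDelta d1 d2) (hd2 : ∀ i, d2 i = a ∨ d2 i = b) :
    Filter.Tendsto (fun k => ((pref w k).count a : ℝ) / k)
      Filter.atTop (nhds (1 / 2)) ∧
    Filter.Tendsto (fun k => ((pref w k).count b : ℝ) / k)
      Filter.atTop (nhds (1 / 2)) :=
  stmt15_general a b ha hb w hw d1 d2 h1 hd1 h2 hd2
end
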